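/- arXiv:2605.05184 — 4 statements merged into one kernel-verified Lean document; each statement's English description precedes it below -/
import Mathlib

section
/- For Boole's map T(x) = x - 1/x, the Lebesgue measure on ℝ is invariant: for every measurable set A ⊆ ℝ, the Lebesgue measure of T⁻¹(A) equals the Lebesgue measure of A. -/
/-!
For `y ∈ ℝ` the equation `x - 1/x = y` has exactly two solutions, the roots `r(y) > 0` and
`y - r(y) < 0` of `x² - y x - 1`, where `r(y) = (y + √(y² + 4)) / 2`. So up to the null set `{0}`,
`T⁻¹(A)` is the disjoint union of `r(A)` and `(id - r)(A)`. Both branches are monotone, and by the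
change of variables formula their images have measures `∫_A r'` and `∫_A (1 - r')`, which add up
to `λ(A)`.
-/

open MeasureTheory Set

theorem volume_image_eq_lintegral_deriv {f : ℝ → ℝ} (hf : Differentiable ℝ f)
    (hf' : ∀ x, 0 ≤ deriv f x) {s : Set ℝ} (hs : MeasurableSet s) :
    volume (f '' s) = ∫⁻ x in s, ENNReal.ofReal (deriv f x) := by
  simpa using lintegral_image_eq_lintegral_deriv_mul_of_monotoneOn hs
    (fun x _ => (hf x).hasDerivAt.hasDerivWithinAt)
    ((monotone_of_deriv_nonneg hf hf').monotoneOn s) 1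

theorem volume_image_add_volume_image_sub_self {g : ℝ → ℝ} (hg : Differentiable ℝ g)
    (hg' : ∀ y, deriv g y ∈ Icc (0 : ℝ) 1) {s : Set ℝ} (hs : MeasurableSet s) :
    volume (g '' s) + volume ((fun y => y - g y) '' s) = volume s := by
  have hderiv : ∀ y, deriv (fun y => y - g y) y = 1 - deriv g y := fun y =>
    ((hasDerivAt_id' y).sub (hg y).hasDerivAt).deriv
  rw [volume_image_eq_lintegral_deriv hg (fun y => (hg' y).1) hs,
    volume_image_eq_lintegral_deriv (f := fun y => y - g y) (differentiable_id.sub hg)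
      (fun y => by simpa [hderiv] using (hg' y).2) hs,
    ← lintegral_add_left (measurable_deriv g).ennreal_ofReal, ← setLIntegral_one]
  refine lintegral_congr fun y => ?_
  rw [hderiv, ← ENNReal.ofReal_add (hg' y).1 (sub_nonneg.2 (hg' y).2), add_sub_cancel,
    ENNReal.ofReal_one]

noncomputable def booleRoot (y : ℝ) : ℝ := (y + √(y ^ 2 + 4)) / 2

lemma booleRoot_mul_sub_booleRoot (y : ℝ) : booleRoot y * (y - booleRoot y) = -1 := by
  have := Real.sq_sqrt (show 0 ≤ y ^ 2 + 4 by positivity)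
  unfold booleRoot
  linear_combination (-1 / 4 : ℝ) * this

lemma booleRoot_pos (y : ℝ) : 0 < booleRoot y := by
  have : -y < √(y ^ 2 + 4) := Real.lt_sqrt_of_sq_lt (by nlinarith)
  unfold booleRoot
  linarith

lemma sub_booleRoot_neg (y : ℝ) : y - booleRoot y < 0 := by
  nlinarith [booleRoot_mul_sub_booleRoot y, booleRoot_pos y]

lemma sub_one_div_eq_iff {x y : ℝ} (hx : x ≠ 0) :
    x - 1 / x = y ↔ x = booleRoot y ∨ x = y - booleRoot y := by
  have hfactor : (x - booleRoot y) * (x - (y - booleRoot y)) = x * (x - 1 / x - y) := by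
    field_simp
    linear_combination booleRoot_mul_sub_booleRoot y
  rw [← sub_eq_zero, ← mul_eq_zero_iff_left hx, ← hfactor, mul_eq_zero, sub_eq_zero, sub_eq_zero]

lemma preimage_sub_one_div_diff_zero (A : Set ℝ) :
    (fun x : ℝ => x - 1 / x) ⁻¹' A \ {0} = booleRoot '' A ∪ (fun y => y - booleRoot y) '' A := by
  ext x
  constructor
  · rintro ⟨hxA, hx0⟩
    rcases (sub_one_div_eq_iff hx0).1 rfl with h | h
    · exact Or.inl ⟨_, hxA, h.symm⟩
    · exact Or.inr ⟨_, hxA, h.symm⟩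
  · rintro (⟨y, hy, rfl⟩ | ⟨y, hy, rfl⟩)
    · have hx := (booleRoot_pos y).ne'
      exact ⟨by rwa [mem_preimage, (sub_one_div_eq_iff hx).2 (Or.inl rfl)], hx⟩
    · have hx := (sub_booleRoot_neg y).ne
      exact ⟨by rwa [mem_preimage, (sub_one_div_eq_iff hx).2 (Or.inr rfl)], hx⟩

lemma hasDerivAt_booleRoot (y : ℝ) :
    HasDerivAt booleRoot ((1 + y / √(y ^ 2 + 4)) / 2) y := by
  have hs : √(y ^ 2 + 4) ≠ 0 := (Real.sqrt_pos.2 (by positivity)).ne'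
  have hsq : HasDerivAt (fun y : ℝ => √(y ^ 2 + 4)) (y / √(y ^ 2 + 4)) y := by
    convert ((hasDerivAt_pow 2 y).add_const 4).sqrt (by positivity) using 1
    field_simp
    ring
  exact ((hasDerivAt_id y).add hsq).div_const 2

lemma differentiable_booleRoot : Differentiable ℝ booleRoot :=
  fun y => (hasDerivAt_booleRoot y).differentiableAt

lemma deriv_booleRoot_mem_Icc (y : ℝ) : deriv booleRoot y ∈ Icc (0 : ℝ) 1 := by
  have hs : 0 < √(y ^ 2 + 4) := Real.sqrt_pos.2 (by positivity)
  have hy : |y / √(y ^ 2 + 4)| ≤ 1 := by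
    rw [abs_div, abs_of_pos hs, div_le_one hs]
    exact Real.abs_le_sqrt (by linarith)
  rw [(hasDerivAt_booleRoot y).deriv]
  constructor <;> linarith [abs_le.1 hy]

/-- Boole's map `T(x) = x - 1/x` preserves Lebesgue measure on `ℝ`:
for every measurable set `A`, the Lebesgue measure of `T⁻¹(A)` equals that of `A`. -/
theorem boole_measure_preserving (A : Set ℝ) (hA : MeasurableSet A) :
    volume ((fun x : ℝ => x - 1 / x) ⁻¹' A) = volume A := by
  have hdisj : Disjoint (booleRoot '' A) ((fun y => y - booleRoot y) '' A) := by
    rw [disjoint_left]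
    rintro _ ⟨y, -, rfl⟩ ⟨z, -, hz⟩
    linarith [booleRoot_pos y, sub_booleRoot_neg z]
  have hmono : Monotone booleRoot :=
    monotone_of_deriv_nonneg differentiable_booleRoot fun y => (deriv_booleRoot_mem_Icc y).1
  rw [← measure_sdiff_null (measure_singleton 0), preimage_sub_one_div_diff_zero,
    measure_union' hdisj (hA.image_of_monotoneOn (hmono.monotoneOn A)),
    volume_image_add_volume_image_sub_self differentiable_booleRoot deriv_booleRoot_mem_Icc hA]
end

section
/- Let T be an ergodic measure-preserving transformation on a probability space (X, 𝒜, μ), let E ⊆ X have positive measure, and set Eₙ = {x ∈ E : τ_E(x) = n}, where τ_E is the first return time of points of E to E. Then ∑ₙ n·μ(Eₙ) = μ(X) = 1 (Kac's lemma). -/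
/-!
Let `A k` be the set of points whose first visit to `E`, counting time `0`, happens at time `k`,
so `A 0 = E`. The preimage `T⁻¹ (A k)` splits disjointly into `A (k + 1)` and `E_{k+1}`, hence by
invariance `μ (A k) = μ (A (k + 1)) + μ E_{k+1}`. The `A k` are disjoint, so `μ (A k) → 0` and
`μ (A k) = ∑_{n > k} μ Eₙ`. By ergodicity almost every point visits `E`, so `∑ₖ μ (A k) = 1`,
and summing the tails counts each `μ Eₙ` exactly `n` times.
-/

open MeasureTheory Set Filter Topology Function
open scoped ENNReal

theorem ENNReal.tsum_natCast_mul_eq_tsum_tsum (f : ℕ → ℝ≥0∞) :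
    ∑' n : ℕ, (n : ℝ≥0∞) * f n = ∑' k, ∑' i, f (i + k + 1) := by
  have hcount (n : ℕ) : (n : ℝ≥0∞) * f n = ∑' k, if k < n then f n else 0 := by
    rw [tsum_eq_sum (s := Finset.range n) fun k hk => if_neg (by simpa using hk),
      Finset.sum_ite_of_true fun k hk => Finset.mem_range.mp hk, Finset.sum_const,
      Finset.card_range, nsmul_eq_mul]
  have hshift (k : ℕ) : ∑' n, (if k < n then f n else 0) = ∑' i, f (i + k + 1) := by
    rw [← (add_left_injective (k + 1)).tsum_eq]
    · exact tsum_congr fun i => by rw [if_pos (by omega), add_assoc]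
    · intro n hn
      have hkn : k < n := by by_contra h; exact hn (if_neg h)
      exact ⟨n - (k + 1), by simp only; omega⟩
  calc ∑' n : ℕ, (n : ℝ≥0∞) * f n = ∑' (n) (k), if k < n then f n else 0 := tsum_congr hcount
    _ = ∑' (k) (n), if k < n then f n else 0 := ENNReal.tsum_comm
    _ = ∑' k, ∑' i, f (i + k + 1) := tsum_congr hshift

section FirstHit

variable {X : Type*} (T : X → X) (E : Set X)

def firstHitSet (k : ℕ) : Set X :=
  {x | T^[k] x ∈ E ∧ ∀ j < k, T^[j] x ∉ E}

def firstReturnSet (n : ℕ) : Set X :=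
  E ∩ {x | T^[n] x ∈ E ∧ ∀ k, 1 ≤ k → k < n → T^[k] x ∉ E}

variable {T E}

theorem preimage_firstHitSet (k : ℕ) :
    T ⁻¹' firstHitSet T E k = firstHitSet T E (k + 1) ∪ firstReturnSet T E (k + 1) := by
  ext x
  simp only [firstHitSet, firstReturnSet, mem_preimage, mem_ofPred_eq, mem_union, mem_inter_iff,
    ← iterate_succ_apply, Nat.forall_lt_succ_left, iterate_zero]
  have hret : (∀ j, 1 ≤ j → j < k + 1 → T^[j] x ∉ E) ↔ ∀ m < k, T^[m + 1] x ∉ E :=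
    ⟨fun h m hm => h (m + 1) (by omega) (by omega),
      fun h j hj₁ hj₂ => by obtain ⟨m, rfl⟩ := Nat.exists_eq_add_of_le' hj₁; exact h m (by omega)⟩
  rw [hret]
  tauto

theorem disjoint_firstHitSet_succ_firstReturnSet (k : ℕ) :
    Disjoint (firstHitSet T E (k + 1)) (firstReturnSet T E (k + 1)) :=
  disjoint_left.mpr fun _ hx hx' => hx.2 0 k.succ_pos hx'.1

theorem pairwise_disjoint_firstHitSet : Pairwise (Disjoint on firstHitSet T E) :=
  (pairwise_disjoint_on _).mpr fun _ _ hlt =>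
    disjoint_left.mpr fun _ hx hx' => hx'.2 _ hlt hx.1

theorem iUnion_firstHitSet : ⋃ k, firstHitSet T E k = ⋃ j, T^[j] ⁻¹' E := by
  ext x
  simp only [mem_iUnion, mem_preimage]
  refine ⟨fun ⟨k, hk⟩ => ⟨k, hk.1⟩, fun hx => ?_⟩
  classical
  exact ⟨Nat.find hx, Nat.find_spec hx, fun j hj => Nat.find_min hx hj⟩

variable [MeasurableSpace X] {μ : Measure X}

theorem measurableSet_firstHitSet (hT : Measurable T) (hE : MeasurableSet E)
    (k : ℕ) : MeasurableSet (firstHitSet T E k) := by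
  simp only [firstHitSet, ofPred_and, ofPred_forall]
  exact (hT.iterate k hE).inter <| .iInter fun j => .iInter fun _ => (hT.iterate j hE).compl

theorem measurableSet_firstReturnSet (hT : Measurable T) (hE : MeasurableSet E) (n : ℕ) :
    MeasurableSet (firstReturnSet T E n) := by
  simp only [firstReturnSet, ofPred_and, ofPred_forall]
  exact hE.inter <| (hT.iterate n hE).inter <|
    .iInter fun k => .iInter fun _ => .iInter fun _ => (hT.iterate k hE).compl

theorem measure_firstHitSet_eq_add (hT : MeasurePreserving T μ μ) (hE : MeasurableSet E)
    (k : ℕ) :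
    μ (firstHitSet T E k) = μ (firstHitSet T E (k + 1)) + μ (firstReturnSet T E (k + 1)) := by
  rw [← hT.measure_preimage (measurableSet_firstHitSet hT.measurable hE k).nullMeasurableSet,
    preimage_firstHitSet, measure_union (disjoint_firstHitSet_succ_firstReturnSet k)
      (measurableSet_firstReturnSet hT.measurable hE _)]

theorem measure_firstHitSet_eq_add_sum (hT : MeasurePreserving T μ μ) (hE : MeasurableSet E)
    (k m : ℕ) : μ (firstHitSet T E k) =
      μ (firstHitSet T E (k + m)) + ∑ i ∈ Finset.range m, μ (firstReturnSet T E (i + k + 1)) := by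
  induction m with
  | zero => simp
  | succ m ih =>
    rw [ih, measure_firstHitSet_eq_add hT hE (k + m), Finset.sum_range_succ, add_comm m k,
      ← add_assoc k m 1]
    ac_rfl

theorem measure_firstHitSet_eq_tsum [IsFiniteMeasure μ] (hT : MeasurePreserving T μ μ)
    (hE : MeasurableSet E) (k : ℕ) :
    μ (firstHitSet T E k) = ∑' i, μ (firstReturnSet T E (i + k + 1)) := by
  have hfinite : ∑' j, μ (firstHitSet T E j) ≠ ∞ := by
    rw [← measure_iUnion pairwise_disjoint_firstHitSet (measurableSet_firstHitSet hT.measurable hE)]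
    exact measure_ne_top _ _
  have htail : Tendsto (fun m => μ (firstHitSet T E (k + m))) atTop (𝓝 0) := by
    simp_rw [add_comm k]
    exact (tendsto_add_atTop_iff_nat k).mpr (ENNReal.tendsto_atTop_zero_of_tsum_ne_top hfinite)
  have hlim := htail.add (ENNReal.tendsto_nat_tsum fun i => μ (firstReturnSet T E (i + k + 1)))
  rw [zero_add] at hlim
  exact tendsto_nhds_unique
    (tendsto_const_nhds.congr (measure_firstHitSet_eq_add_sum hT hE k)) hlim

theorem Ergodic.iUnion_preimage_iterate_ae_eq_univ [IsFiniteMeasure μ] (hT : Ergodic T μ)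
    (hE : MeasurableSet E) (hE₀ : μ E ≠ 0) : (⋃ j, T^[j] ⁻¹' E) =ᵐ[μ] univ := by
  have hmeas : MeasurableSet (⋃ j, T^[j] ⁻¹' E) :=
    .iUnion fun j => hT.measurable.iterate j hE
  have hinv : T ⁻¹' ⋃ j, T^[j] ⁻¹' E ⊆ ⋃ j, T^[j] ⁻¹' E := by
    simp only [preimage_iUnion, ← preimage_comp, ← iterate_succ]
    exact iUnion_subset fun j => subset_iUnion (fun j => T^[j] ⁻¹' E) (j + 1)
  refine (hT.ae_empty_or_univ_of_preimage_ae_le hmeas.nullMeasurableSet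
    hinv.eventuallyLE).resolve_left fun hnull => hE₀ ?_
  exact measure_mono_null (subset_iUnion_of_subset 0 subset_rfl) (ae_eq_empty.mp hnull)

theorem tsum_measure_firstHitSet [IsFiniteMeasure μ] (hT : Ergodic T μ) (hE : MeasurableSet E)
    (hE₀ : μ E ≠ 0) : ∑' k, μ (firstHitSet T E k) = μ univ := by
  rw [← measure_iUnion pairwise_disjoint_firstHitSet (measurableSet_firstHitSet hT.measurable hE),
    iUnion_firstHitSet, measure_congr (hT.iUnion_preimage_iterate_ae_eq_univ hE hE₀)]

end FirstHit

/-- Kac's lemma: if `T` is an ergodic measure-preserving transformation of a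
probability space and `E` has positive measure, then with
`Eₙ = {x ∈ E : τ_E(x) = n}` (first return time exactly `n`), one has
`∑ₙ n·μ(Eₙ) = μ(X) = 1`. -/
theorem kacs_lemma
    {X : Type*} [MeasurableSpace X] (μ : Measure X) [IsProbabilityMeasure μ]
    (T : X → X) (hT : Ergodic T μ)
    (E : Set X) (hE : MeasurableSet E) (hpos : 0 < μ E) :
    ∑' n : ℕ, (n : ENNReal) *
        μ (E ∩ {x | T^[n] x ∈ E ∧ ∀ k, 1 ≤ k → k < n → T^[k] x ∉ E}) = 1 := by
  change ∑' n : ℕ, (n : ℝ≥0∞) * μ (firstReturnSet T E n) = 1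
  rw [ENNReal.tsum_natCast_mul_eq_tsum_tsum, ← measure_univ (μ := μ),
    ← tsum_measure_firstHitSet hT hE hpos.ne']
  exact tsum_congr fun k => (measure_firstHitSet_eq_tsum hT.toMeasurePreserving hE k).symm
end

section
/- For Boole's map T(x) = x - 1/x and any real x with |x| > 1, there exists n with 0 ≤ n ≤ ⌊x²⌋ such that Tⁿ(x) ∈ (-1, 1), provided the orbit is well-defined (never hits 0). -/
lemma sq_ge_one_of_not_mem_Ioo (y : ℝ) (hy : y ∉ Set.Ioo (-1 : ℝ) 1) : 1 ≤ y ^ 2 := by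
  have h' : -1 < y → 1 ≤ y := by simpa [Set.mem_Ioo, not_and, not_lt] using hy
  rcases lt_or_ge (-1 : ℝ) y with h1 | h1
  · nlinarith [h' h1]
  · nlinarith

/-- For Boole's map `T(x) = x - 1/x` and any real `x` with `|x| > 1` whose orbit
never hits `0`, there exists `n ≤ ⌊x²⌋` with `Tⁿ(x) ∈ (-1,1)`. -/
theorem boole_enters_D (x : ℝ) (hx : 1 < |x|)
    (horb : ∀ n : ℕ, (fun y : ℝ => y - 1 / y)^[n] x ≠ 0) :
    ∃ n : ℕ, n ≤ ⌊x ^ 2⌋₊ ∧ (fun y : ℝ => y - 1 / y)^[n] x ∈ Set.Ioo (-1 : ℝ) 1 := by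
  by_contra h
  push_neg at h
  set T : ℝ → ℝ := fun y : ℝ => y - 1 / y with hT
  set N := ⌊x ^ 2⌋₊ with hN
  have key : ∀ n : ℕ, n ≤ N → (T^[n] x) ^ 2 ≤ x ^ 2 - n := by
    intro n
    induction n with
    | zero => intro _; simp
    | succ n ih =>
      intro hn
      have hn' : n ≤ N := Nat.le_of_succ_le hn
      have IH := ih hn'
      set y := T^[n] x with hy
      have hy0 : y ≠ 0 := horb n
      have hyni : y ∉ Set.Ioo (-1 : ℝ) 1 := h n hn'
      have hy1 : 1 ≤ y ^ 2 := sq_ge_one_of_not_mem_Ioo y hyni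
      have hstep : (T y) ^ 2 ≤ y ^ 2 - 1 := by
        have hinv : (1 / y) ^ 2 ≤ 1 := by
          rw [div_pow, one_pow, div_le_one (by positivity)]
          exact hy1
        have hmul : y * (1 / y) = 1 := by field_simp
        show (y - 1 / y) ^ 2 ≤ y ^ 2 - 1
        nlinarith [hinv, hmul]
      have : T^[n + 1] x = T y := by
        rw [Function.iterate_succ_apply']
      rw [this]
      push_cast
      linarith
  have hfinal := key N le_rfl
  have hyni := h N le_rfl
  have hy1 : 1 ≤ (T^[N] x) ^ 2 := sq_ge_one_of_not_mem_Ioo _ hyni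
  have hlt : x ^ 2 < N + 1 := Nat.lt_floor_add_one (x ^ 2)
  linarith
end

section
/- Let T(x) = x - 1/x and let x ∈ ℝ, r ∈ (0, 1/4). Then there exists a periodic point p of T in (x - r, x + r) with period at most ((-ln r)/ln 2 + 1)·(4/r²) + x². -/
/-!
Boole's map `T y = y - 1/y` is an increasing bijection from each half-line onto `ℝ`, it is odd,
and it expands: `T b - T a = (b - a) (1 + 1/(ab))`. Pull a short interval `J = [a, b] ⊂ (0, ∞)`
near `x` forward along inverse branches. While `a > 1`, one step lowers `a²` by at least `1`.
Once `J ⊂ (0, 1)`, its image is a negative interval at least twice as long whose end nearest to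
`0` has square at most `1/(b - a)²`, and by oddness we start over. Once `J` contains `1`, its
image contains `[0, m]` or `[-m, 0]` with `m ≈ (b - a)/2`; the next image is a half-line
`(-∞, T m]`, which reaches `ℝ` after about `1/m²` more steps. The potential `a² + 4/(b - a)²`
pays for all of this, so `J` covers `ℝ`, and in particular itself, along a continuous inverse
branch `g` of `T^N` with `N ≲ x² + 12/r²`; a fixed point of `g` in `J` is the periodic point.
-/

open Set Function

theorem Function.IsPeriodicPt.iterate_ne_of_isFixedPt {α : Type*} {f : α → α} {z p : α} {N : ℕ}
    (hp : IsPeriodicPt f N p) (hN : 0 < N) (hz : IsFixedPt f z) (hpz : p ≠ z) (n : ℕ) :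
    f^[n] p ≠ z := by
  intro h
  apply hpz
  calc p = f^[N * n - n + n] p := by
        rw [Nat.sub_add_cancel (Nat.le_mul_of_pos_left n hN)]; exact (hp.mul_const n).eq.symm
    _ = z := by rw [iterate_add_apply, h, iterate_fixed hz]

namespace Boole

noncomputable def boole (y : ℝ) : ℝ := y - 1 / y

lemma boole_neg (y : ℝ) : boole (-y) = -boole y := by
  simp only [boole, one_div, inv_neg]; ring

lemma iterate_boole_neg (n : ℕ) (y : ℝ) : boole^[n] (-y) = -boole^[n] y :=
  ((Commute.iterate_right (f := Neg.neg) (fun y => (boole_neg y).symm) n) y).symm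

lemma boole_sub_boole {a b : ℝ} (ha : a ≠ 0) (hb : b ≠ 0) :
    boole b - boole a = (b - a) * (1 + 1 / (a * b)) := by
  unfold boole; field_simp; ring

lemma sq_boole {y : ℝ} (hy : y ≠ 0) : boole y ^ 2 = y ^ 2 + (1 / y) ^ 2 - 2 := by
  unfold boole; field_simp; ring

lemma strictMonoOn_boole : StrictMonoOn boole (Ioi 0) := by
  intro a ha b _ hab
  have := one_div_lt_one_div_of_lt (mem_Ioi.1 ha) hab
  unfold boole; linarith

lemma sub_le_boole_sub_boole {a b : ℝ} (ha : 0 < a) (hab : a ≤ b) :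
    b - a ≤ boole b - boole a := by
  rw [boole_sub_boole ha.ne' (ha.trans_le hab).ne']
  have : 0 ≤ 1 / (a * b) := by have := ha.trans_le hab; positivity
  nlinarith

lemma two_mul_sub_le_boole_sub_boole {a b : ℝ} (ha : 0 < a) (hab : a ≤ b) (hb : b ≤ 1) :
    2 * (b - a) ≤ boole b - boole a := by
  have hb0 := ha.trans_le hab
  rw [boole_sub_boole ha.ne' hb0.ne']
  have : 1 ≤ 1 / (a * b) := by
    rw [le_div_iff₀ (by positivity)]; nlinarith
  nlinarith

/-- The positive root of `z² - w z - 1 = 0`: the inverse of `boole` on `(0, ∞)`. -/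
noncomputable def booleInv (w : ℝ) : ℝ := (w + √(w ^ 2 + 4)) / 2

lemma booleInv_pos (w : ℝ) : 0 < booleInv w := by
  have h := Real.sq_sqrt (show 0 ≤ w ^ 2 + 4 by positivity)
  have := Real.sqrt_nonneg (w ^ 2 + 4)
  unfold booleInv; nlinarith

lemma boole_booleInv (w : ℝ) : boole (booleInv w) = w := by
  have h := Real.sq_sqrt (show 0 ≤ w ^ 2 + 4 by positivity)
  have hpos := booleInv_pos w
  have hq : booleInv w ^ 2 - w * booleInv w - 1 = 0 := by unfold booleInv; nlinarith
  unfold boole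
  field_simp
  linarith

lemma continuous_booleInv : Continuous booleInv := by
  unfold booleInv; fun_prop

lemma boole_nonpos_iff {y : ℝ} (hy : 0 < y) : boole y ≤ 0 ↔ y ≤ 1 := by
  rw [show (0 : ℝ) = boole 1 by norm_num [boole]]
  exact strictMonoOn_boole.le_iff_le hy (mem_Ioi.2 one_pos)

lemma boole_lt_zero_iff {y : ℝ} (hy : 0 < y) : boole y < 0 ↔ y < 1 := by
  rw [show (0 : ℝ) = boole 1 by norm_num [boole]]
  exact strictMonoOn_boole.lt_iff_lt hy (mem_Ioi.2 one_pos)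

lemma booleInv_le_iff {y z : ℝ} (hz : 0 < z) : booleInv y ≤ z ↔ y ≤ boole z := by
  conv_rhs => rw [← boole_booleInv y]
  exact (strictMonoOn_boole.le_iff_le (booleInv_pos y) hz).symm

lemma le_booleInv_iff {y z : ℝ} (hz : 0 < z) : z ≤ booleInv y ↔ boole z ≤ y := by
  conv_rhs => rw [← boole_booleInv y]
  exact (strictMonoOn_boole.le_iff_le hz (booleInv_pos y)).symm

/-- `I` covers `K` in `n` steps: a continuous inverse branch of `boole^[n]` maps `K` into `I`. -/
def Covers (n : ℕ) (I K : Set ℝ) : Prop :=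
  ∃ g : ℝ → ℝ, Continuous g ∧ LeftInverse boole^[n] g ∧ MapsTo g K I

namespace Covers

variable {m n : ℕ} {I J K : Set ℝ}

lemma mono (h : Covers n I K) {I' K' : Set ℝ} (hI : I ⊆ I') (hK : K' ⊆ K) : Covers n I' K' :=
  let ⟨g, hc, hinv, hmaps⟩ := h
  ⟨g, hc, hinv, hmaps.mono hK hI⟩

lemma trans (h₁ : Covers m I J) (h₂ : Covers n J K) : Covers (n + m) I K := by
  obtain ⟨g₁, hc₁, hinv₁, hmaps₁⟩ := h₁
  obtain ⟨g₂, hc₂, hinv₂, hmaps₂⟩ := h₂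
  refine ⟨g₁ ∘ g₂, hc₁.comp hc₂, ?_, hmaps₁.comp hmaps₂⟩
  rw [iterate_add]
  exact hinv₁.comp hinv₂

lemma neg (h : Covers n I K) : Covers n (-I) (-K) := by
  obtain ⟨g, hc, hinv, hmaps⟩ := h
  refine ⟨fun y => -g (-y), by fun_prop, fun y => ?_, fun y hy => ?_⟩
  · rw [iterate_boole_neg, hinv, neg_neg]
  · simpa using hmaps hy

lemma of_mapsTo_booleInv (h : MapsTo booleInv K I) : Covers 1 I K :=
  ⟨booleInv, continuous_booleInv, boole_booleInv, h⟩

lemma univ_univ : Covers 1 univ univ :=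
  of_mapsTo_booleInv (mapsTo_univ _ _)

lemma univ_of_le (h : Covers m I univ) (hmn : m ≤ n) : Covers n I univ := by
  induction n, hmn using Nat.le_induction with
  | base => exact h
  | succ n _ ih => rw [add_comm]; exact ih.trans univ_univ

lemma exists_isPeriodicPt {a b : ℝ} (hab : a ≤ b) (h : Covers n (Icc a b) (Icc a b)) :
    ∃ p ∈ Icc a b, IsPeriodicPt boole n p := by
  obtain ⟨g, hc, hinv, hmaps⟩ := h
  obtain ⟨p, hp, hfix⟩ := exists_mem_Icc_isFixedPt_of_mapsTo hc.continuousOn hab hmaps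
  refine ⟨p, hp, ?_⟩
  have := hinv p
  rwa [hfix.eq] at this

end Covers

lemma covers_Icc_boole {a b : ℝ} (ha : 0 < a) (hab : a ≤ b) :
    Covers 1 (Icc a b) (Icc (boole a) (boole b)) :=
  .of_mapsTo_booleInv fun _ hy =>
    ⟨(le_booleInv_iff ha).2 hy.1, (booleInv_le_iff (ha.trans_le hab)).2 hy.2⟩

lemma covers_Ici_univ : ∀ (n : ℕ) (c : ℝ), c ^ 2 ≤ n → Covers (n + 1) (Ici c) univ := by
  have covers_univ {c : ℝ} (hc : c ≤ 0) : Covers 1 (Ici c) univ :=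
    .of_mapsTo_booleInv fun y _ => hc.trans (booleInv_pos y).le
  intro n
  induction n with
  | zero =>
    intro c hc
    exact covers_univ (by push_cast at hc; nlinarith)
  | succ n ih =>
    intro c hc
    rcases le_or_gt c 0 with hc0 | hc0
    · exact (covers_univ hc0).univ_of_le (by omega)
    have hstep : Covers 1 (Ici c) (Ici (boole c)) :=
      .of_mapsTo_booleInv fun _ hy => (le_booleInv_iff hc0).2 hy
    rcases le_or_gt c 1 with hc1 | hc1
    · exact (hstep.trans (covers_univ ((boole_nonpos_iff hc0).2 hc1))).univ_of_le (by omega)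
    · have : boole c ^ 2 ≤ n := by
        have h1 : (1 / c) ^ 2 ≤ 1 := by
          rw [div_pow, one_pow, div_le_one (by positivity)]; nlinarith
        rw [sq_boole hc0.ne']; push_cast at hc; linarith
      exact hstep.trans (ih _ this)

lemma covers_Icc_zero_univ {m : ℝ} {n : ℕ} (hm0 : 0 < m) (hm1 : m ≤ 1) (h : 1 / m ^ 2 ≤ n + 1) :
    Covers (n + 2) (Icc 0 m) univ := by
  have hstep : Covers 1 (Icc 0 m) (Iic (boole m)) :=
    .of_mapsTo_booleInv fun y hy => ⟨(booleInv_pos y).le, (booleInv_le_iff hm0).2 hy⟩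
  have hsq : (-boole m) ^ 2 ≤ n := by
    rw [neg_sq, sq_boole hm0.ne', div_pow, one_pow]; nlinarith
  have hdescent := (covers_Ici_univ n _ hsq).neg
  rw [neg_Ici, neg_neg, neg_univ] at hdescent
  exact hstep.trans hdescent

lemma covers_Icc_univ_of_nonpos_of_nonneg {c d : ℝ} {n : ℕ} (hc : c ≤ 0) (hd : 0 ≤ d)
    (hcd : c < d) (h : 4 / (d - c) ^ 2 ≤ n + 1) : Covers (n + 2) (Icc c d) univ := by
  have hl := sub_pos.2 hcd
  obtain ⟨m, hm0, hm1, hlen, hm⟩ :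
      ∃ m : ℝ, 0 < m ∧ m ≤ 1 ∧ 2 * m ≤ d - c ∧ 1 / m ^ 2 ≤ n + 1 := by
    rcases le_total (d - c) 2 with hl2 | hl2
    · refine ⟨(d - c) / 2, by positivity, by linarith, by linarith, ?_⟩
      rwa [show 1 / ((d - c) / 2) ^ 2 = 4 / (d - c) ^ 2 by field_simp; ring]
    · exact ⟨1, one_pos, le_rfl, by linarith, by norm_num⟩
  rcases le_total m d with hmd | hmd
  · exact (covers_Icc_zero_univ hm0 hm1 hm).mono (Icc_subset_Icc hc hmd) subset_rfl
  · have hneg := (covers_Icc_zero_univ hm0 hm1 hm).neg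
    rw [neg_Icc, neg_zero, neg_univ] at hneg
    exact hneg.mono (Icc_subset_Icc (by linarith) hd) subset_rfl

lemma covers_Icc_univ :
    ∀ (n : ℕ) (a b : ℝ), 0 < a → a < b → a ^ 2 + 4 / (b - a) ^ 2 ≤ n →
      Covers (n + 2) (Icc a b) univ := by
  intro n
  induction n with
  | zero =>
    intro a b ha hab h
    have : 0 < 4 / (b - a) ^ 2 := by have := sub_pos.2 hab; positivity
    push_cast at h; nlinarith
  | succ n ih =>
    intro a b ha hab h
    push_cast at h
    have hb := ha.trans hab
    have hl := sub_pos.2 hab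
    have hstep := covers_Icc_boole ha hab.le
    have hTab := strictMonoOn_boole ha hb hab
    have hlen : 4 / (boole b - boole a) ^ 2 ≤ 4 / (b - a) ^ 2 := by
      gcongr 4 / ?_ ^ 2; exact sub_le_boole_sub_boole ha hab.le
    rcases lt_or_ge 1 a with ha1 | ha1
    · have hTa : 0 < boole a := not_le.1 (mt (boole_nonpos_iff ha).1 ha1.not_ge)
      have hsq : boole a ^ 2 ≤ a ^ 2 - 1 := by
        rw [sq_boole ha.ne', div_pow, one_pow]
        have : 1 / a ^ 2 ≤ 1 := by rw [div_le_one (by positivity)]; nlinarith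
        linarith
      exact hstep.trans (ih _ _ hTa hTab (by linarith))
    rcases lt_or_ge b 1 with hb1 | hb1
    · have hTb : boole b < 0 := (boole_lt_zero_iff hb).2 hb1
      have hsq : boole b ^ 2 ≤ 1 / (b - a) ^ 2 - 1 := by
        rw [sq_boole hb.ne', div_pow, one_pow]
        have : 1 / b ^ 2 ≤ 1 / (b - a) ^ 2 := by gcongr; linarith
        nlinarith
      have hlen₂ : 4 / (boole b - boole a) ^ 2 ≤ 1 / (b - a) ^ 2 := by
        calc 4 / (boole b - boole a) ^ 2 ≤ 4 / (2 * (b - a)) ^ 2 := by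
              gcongr 4 / ?_ ^ 2; exact two_mul_sub_le_boole_sub_boole ha hab.le hb1.le
          _ = 1 / (b - a) ^ 2 := by field_simp; ring
      have hmirror := (ih (-boole b) (-boole a) (neg_pos.2 hTb) (neg_lt_neg hTab) (by
          have : 4 / (b - a) ^ 2 = 4 * (1 / (b - a) ^ 2) := by ring
          have : 0 ≤ 1 / (b - a) ^ 2 := by positivity
          rw [neg_sq, neg_sub_neg]; nlinarith)).neg
      rw [neg_Icc, neg_neg, neg_neg, neg_univ] at hmirror
      exact hstep.trans hmirror
    · exact hstep.trans (covers_Icc_univ_of_nonpos_of_nonneg ((boole_nonpos_iff ha).2 ha1)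
        (not_lt.1 (mt (boole_lt_zero_iff hb).1 hb1.not_gt)) hTab (by nlinarith))

lemma exists_isPeriodicPt_near (x : ℝ) {r : ℝ} (hr0 : 0 < r) (hr : r ≤ 1 / 4) :
    ∃ (p : ℝ) (N : ℕ), p ∈ Ioo (x - r) (x + r) ∧ p ≠ 0 ∧ 2 ≤ N ∧ IsPeriodicPt boole N p ∧
      (N : ℝ) ≤ x ^ 2 + 12 / r ^ 2 := by
  wlog hx : 0 ≤ x generalizing x
  · obtain ⟨p, N, hp, hp0, hN, hper, hNle⟩ := this (-x) (by linarith)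
    refine ⟨-p, N, ⟨by linarith [hp.2], by linarith [hp.1]⟩, neg_ne_zero.2 hp0, hN, ?_, ?_⟩
    · rw [IsPeriodicPt, IsFixedPt, iterate_boole_neg, hper.eq]
    · rwa [neg_sq] at hNle
  -- `[a, a + 3r/4]` lies in `(x - r, x + r) ∩ (0, ∞)`.
  set a := max x r - 7 * r / 8 with ha_def
  set b := a + 3 * r / 4 with hb_def
  have ha0 : 0 < a := by have := le_max_right x r; linarith
  have ha : a ^ 2 ≤ x ^ 2 + r ^ 2 := by
    rcases max_cases x r with ⟨h, _⟩ | ⟨h, _⟩ <;> rw [ha_def, h] <;> nlinarith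
  have hlen : 4 / (b - a) ^ 2 = 64 / 9 * (1 / r ^ 2) := by rw [hb_def]; field_simp; ring
  have hcov := covers_Icc_univ ⌈a ^ 2 + 4 / (b - a) ^ 2⌉₊ a b ha0 (by linarith) (Nat.le_ceil _)
  obtain ⟨p, hp, hper⟩ := (hcov.mono subset_rfl (subset_univ _)).exists_isPeriodicPt (by linarith)
  refine ⟨p, _, ⟨?_, ?_⟩, (ha0.trans_le hp.1).ne', by omega, hper, ?_⟩
  · have := le_max_left x r; linarith [hp.1]
  · have := max_le_iff.2 ⟨le_add_of_nonneg_right hr0.le, le_add_of_nonneg_left hx⟩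
    linarith [hp.2]
  · have hceil := Nat.ceil_lt_add_one (show 0 ≤ a ^ 2 + 4 / (b - a) ^ 2 by positivity)
    have hr2 : 16 ≤ 1 / r ^ 2 := by rw [le_div_iff₀ (by positivity)]; nlinarith
    have : 12 / r ^ 2 = 12 * (1 / r ^ 2) := by ring
    push_cast
    nlinarith

lemma two_le_neg_log_div_log_two {r : ℝ} (hr0 : 0 < r) (hr : r ≤ 1 / 4) :
    2 ≤ -Real.log r / Real.log 2 := by
  have hlog4 : Real.log (1 / 4) = -(2 * Real.log 2) := by
    rw [one_div, Real.log_inv, show (4 : ℝ) = 2 ^ 2 by norm_num, Real.log_pow]; norm_num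
  rw [le_div_iff₀ (Real.log_pos one_lt_two)]
  linarith [Real.log_le_log hr0 hr]

end Boole

/-- Periodic points for Boole's map: for every `x ∈ ℝ` and `r ∈ (0, 1/4)` there
is a periodic point `p ∈ (x-r, x+r)` of `T(y) = y - 1/y` (with well-defined
orbit, never hitting 0) whose period is at most
`((-ln r)/ln 2 + 1)·(4/r²) + x²`. -/
theorem boole_periodic_points (x : ℝ) (r : ℝ) (hr : r ∈ Set.Ioo (0 : ℝ) (1 / 4)) :
    ∃ (p : ℝ) (N : ℕ), p ∈ Set.Ioo (x - r) (x + r) ∧ 1 ≤ N ∧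
      (∀ n : ℕ, (fun y : ℝ => y - 1 / y)^[n] p ≠ 0) ∧
      (fun y : ℝ => y - 1 / y)^[N] p = p ∧
      (N : ℝ) ≤ (-Real.log r / Real.log 2 + 1) * (4 / r ^ 2) + x ^ 2 := by
  obtain ⟨p, N, hp, hp0, hN, hper, hNle⟩ := Boole.exists_isPeriodicPt_near x hr.1 hr.2.le
  -- `1 / 0 = 0` makes `0` a fixed point, so a periodic orbit through `p ≠ 0` never meets it.
  have hzero : IsFixedPt Boole.boole 0 := by simp [IsFixedPt, Boole.boole]
  refine ⟨p, N, hp, by omega, hper.iterate_ne_of_isFixedPt (by omega) hzero hp0, hper.eq, ?_⟩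
  have hlog := Boole.two_le_neg_log_div_log_two hr.1 hr.2.le
  calc (N : ℝ) ≤ x ^ 2 + 12 / r ^ 2 := hNle
    _ = (2 + 1) * (4 / r ^ 2) + x ^ 2 := by ring
    _ ≤ (-Real.log r / Real.log 2 + 1) * (4 / r ^ 2) + x ^ 2 := by gcongr
end
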